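/- In the lattice of flats (F, ⊆) of a Faigle geometry (P, F), for X, Y ∈ F one has X ≺ Y if and only if there exists u ∈ Y \ X such that ⇓u ⊆ X and Y = cl(X ∪ {u}). -/

import Mathlib

/-- `X` is a down-set of the poset `P`. -/
def IsDownSet {P : Type*} [PartialOrder P] (X : Set P) : Prop :=
  ∀ ⦃x⦄, x ∈ X → ∀ ⦃y⦄, y ≤ x → y ∈ X

/-- `Y` covers `X` in the poset `(F, ⊆)`. -/
def CoversIn {P : Type*} (F : Set (Set P)) (X Y : Set P) : Prop :=
  X ⊂ Y ∧ ∀ Z ∈ F, ¬(X ⊂ Z ∧ Z ⊂ Y)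

/-- The closure operator associated to the closure system `F`:
`cl(X) = ⋂ {Y ∈ F : X ⊆ Y}`. -/
def clF {P : Type*} (F : Set (Set P)) (X : Set P) : Set P :=
  ⋂₀ {Y | Y ∈ F ∧ X ⊆ Y}

/-- `(P, F)` is a Faigle geometry. -/
structure IsFaigle {P : Type*} [PartialOrder P] [Finite P] (F : Set (Set P)) : Prop where
  univ_mem : Set.univ ∈ F
  inter_mem : ∀ X ∈ F, ∀ Y ∈ F, X ∩ Y ∈ F
  down : ∀ X ∈ F, IsDownSet X
  empty_mem : ∅ ∈ F
  Iic_mem : ∀ u : P, Set.Iic u ∈ F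
  Iio_mem : ∀ u : P, Set.Iio u ∈ F
  cp : ∀ (u : P), ∀ X ∈ F, u ∉ X → Set.Iio u ⊆ X →
      ∃ Y ∈ F, u ∈ Y ∧ CoversIn F X Y

/-!
Both directions rest on one observation: if a flat `W` covers `X` and contains some `u ∉ X`, then
`W = cl(X ∪ {u})`, because the flat `W ∩ cl(X ∪ {u})` lies strictly above `X` and inside `W`.
If `X ≺ Y`, apply it to a minimal `u ∈ Y \ X`, for which `⇓u ⊆ X` as `Y` is a down-set.
Conversely, `(CP)` supplies a flat `W ≻ X` containing `u`, which is then `cl(X ∪ {u}) = Y`.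
-/

section ClosureSystem

variable {P : Type*} {F : Set (Set P)}

lemma subset_clF (F : Set (Set P)) (S : Set P) : S ⊆ clF F S :=
  fun _ hx => Set.mem_sInter.2 fun _ hW => hW.2 hx

lemma clF_subset {S W : Set P} (hW : W ∈ F) (hSW : S ⊆ W) : clF F S ⊆ W :=
  Set.sInter_subset_of_mem ⟨hW, hSW⟩

lemma clF_mem [Finite P] (huniv : Set.univ ∈ F) (hinter : InfClosed F) (S : Set P) :
    clF F S ∈ F :=
  hinter.sInf_mem (Set.toFinite _) huniv fun _ hW => hW.1

lemma CoversIn.eq_of_ssubset_of_subset {X Y Z : Set P} (h : CoversIn F X Y) (hZ : Z ∈ F)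
    (hXZ : X ⊂ Z) (hZY : Z ⊆ Y) : Z = Y := by
  by_contra hne
  exact h.2 Z hZ ⟨hXZ, hZY.ssubset_of_ne hne⟩

lemma CoversIn.eq_clF_union_singleton [Finite P] (huniv : Set.univ ∈ F) (hinter : InfClosed F)
    {X W : Set P} {u : P} (h : CoversIn F X W) (hW : W ∈ F) (hu : u ∈ W \ X) :
    W = clF F (X ∪ {u}) := by
  set C := clF F (X ∪ {u})
  have hCW : C ⊆ W := clF_subset hW (Set.union_subset h.1.subset (by simpa using hu.1))
  have huC : u ∈ C := subset_clF F _ (Set.mem_union_right _ rfl)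
  have hXC : X ⊆ C := Set.subset_union_left.trans (subset_clF F _)
  have hmeet : W ∩ C = W :=
    h.eq_of_ssubset_of_subset (hinter hW (clF_mem huniv hinter _))
      ((Set.ssubset_iff_of_subset (Set.subset_inter h.1.subset hXC)).2 ⟨u, ⟨hu.1, huC⟩, hu.2⟩)
      Set.inter_subset_left
  exact (Set.inter_eq_left.1 hmeet).antisymm hCW

end ClosureSystem

lemma IsDownSet.exists_Iio_subset_of_ssubset {P : Type*} [PartialOrder P] [Finite P]
    {X Y : Set P} (hY : IsDownSet Y) (hXY : X ⊂ Y) : ∃ u ∈ Y \ X, Set.Iio u ⊆ X := by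
  obtain ⟨u, hu⟩ := (Set.toFinite (Y \ X)).exists_minimal (Set.nonempty_of_ssubset hXY)
  refine ⟨u, hu.prop, fun x hxu => ?_⟩
  by_contra hxX
  exact hu.not_lt ⟨hY hu.prop.1 hxu.le, hxX⟩ hxu

lemma IsFaigle.infClosed {P : Type*} [PartialOrder P] [Finite P] {F : Set (Set P)}
    (hF : IsFaigle F) : InfClosed F :=
  fun _ hX _ hY => hF.inter_mem _ hX _ hY

/-- Cover characterization in the lattice of flats: for `X, Y ∈ F`,
`X ≺ Y` iff there is `u ∈ Y \ X` with `⇓u ⊆ X` and `Y = cl(X ∪ {u})`. -/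
theorem flats_cover_iff {P : Type*} [PartialOrder P] [Finite P]
    {F : Set (Set P)} (hF : IsFaigle F) {X Y : Set P} (hX : X ∈ F) (hY : Y ∈ F) :
    CoversIn F X Y ↔
      ∃ u : P, u ∈ Y \ X ∧ Set.Iio u ⊆ X ∧ Y = clF F (X ∪ {u}) := by
  constructor
  · intro hcov
    obtain ⟨u, hu, hIio⟩ := (hF.down Y hY).exists_Iio_subset_of_ssubset hcov.1
    exact ⟨u, hu, hIio, hcov.eq_clF_union_singleton hF.univ_mem hF.infClosed hY hu⟩
  · rintro ⟨u, hu, hIio, rfl⟩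
    obtain ⟨W, hW, huW, hcov⟩ := hF.cp u X hX hu.2 hIio
    rwa [← hcov.eq_clF_union_singleton hF.univ_mem hF.infClosed hW ⟨huW, hu.2⟩]
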